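/- Fix a natural number Am, w > 0, and ce : ℝ → ℕ → ℝ which is submodular in (γ,a) on (0,∞) × {0,…,Am}: for all 0 < γ⁻ ≤ γ⁺ and a⁻ ≤ a⁺ ≤ Am, ce(γ⁺,a⁻) + ce(γ⁻,a⁺) ≥ ce(γ⁻,a⁻) + ce(γ⁺,a⁺). Consider the symmetric-form game on A = {0,…,Am} where the player with SNR γ playing a against b has cost c(γ,a,b) = w·ce(γ,a) + (b+1)/(a+1). Then the least PSNE is nondecreasing in the SNR vector: for 0 < γ₁⁻ ≤ γ₁⁺ and 0 < γ₂⁻ ≤ γ₂⁺, if (a₀⁻,b₀⁻) is the least PSNE at (γ₁⁻,γ₂⁻) and (a₀⁺,b₀⁺) is the least PSNE at (γ₁⁺,γ₂⁺), then a₀⁻ ≤ a₀⁺ and b₀⁻ ≤ b₀⁺. -/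
import Mathlib

/-- Over `{0,…,Am}` any real-valued function has a least minimizer: a minimizer
that is strictly better than every smaller point. -/
lemma exists_least_min (Am : ℕ) (F : ℕ → ℝ) :
    ∃ a, a ≤ Am ∧ (∀ a', a' ≤ Am → F a ≤ F a') ∧ (∀ a', a' < a → F a < F a') := by
  classical
  have hne : (Finset.range (Am + 1)).Nonempty := ⟨0, by simp⟩
  obtain ⟨a0, ha0, hmin⟩ := Finset.exists_min_image (Finset.range (Am + 1)) F hne
  have hP : ∃ a, a ≤ Am ∧ ∀ a', a' ≤ Am → F a ≤ F a' := by
    refine ⟨a0, ?_, ?_⟩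
    · simpa [Nat.lt_succ_iff] using ha0
    · intro a' ha'
      exact hmin a' (by simpa [Nat.lt_succ_iff] using ha')
  refine ⟨Nat.find hP, (Nat.find_spec hP).1, (Nat.find_spec hP).2, ?_⟩
  intro a' ha'
  have hnot := Nat.find_min hP ha'
  push_neg at hnot
  have ha'A : a' ≤ Am := le_trans ha'.le (Nat.find_spec hP).1
  obtain ⟨a0', ha0', hlt⟩ := hnot ha'A
  exact lt_of_le_of_lt ((Nat.find_spec hP).2 a0' ha0') hlt

/-- Key monotone-comparative-statics step: the least best response at the lower
parameters `(γ, b)` is below any best response at higher parameters `(γ', b')`. -/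
lemma br_le (Am : ℕ) (w : ℝ) (hw : 0 < w) (ce : ℝ → ℕ → ℝ)
    (hsub : ∀ (gm gp : ℝ) (am ap : ℕ), 0 < gm → gm ≤ gp → am ≤ ap → ap ≤ Am →
      ce gm am + ce gp ap ≤ ce gp am + ce gm ap)
    (c : ℝ → ℕ → ℕ → ℝ)
    (hc : ∀ (γ : ℝ) (a b : ℕ),
      c γ a b = w * ce γ a + ((b : ℝ) + 1) / ((a : ℝ) + 1))
    (γ γ' : ℝ) (hγ : 0 < γ) (hγ' : γ ≤ γ')
    (b b' : ℕ) (hb : b ≤ b')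
    (A : ℕ) (hA : A ≤ Am)
    (hAlt : ∀ a', a' < A → c γ A b < c γ a' b)
    (a' : ℕ) (ha' : a' ≤ Am)
    (hopt : ∀ a'', a'' ≤ Am → c γ' a' b' ≤ c γ' a'' b') : A ≤ a' := by
  by_contra hlt
  push_neg at hlt
  have H1 := hAlt a' hlt
  have H2 := hopt A hA
  have H3 := hsub γ γ' a' A hγ hγ' hlt.le hA
  simp only [hc] at H1 H2
  have H3' : w * ce γ a' + w * ce γ' A ≤ w * ce γ' a' + w * ce γ A := by nlinarith
  have hA1 : (0:ℝ) < (A:ℝ) + 1 := by positivity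
  have ha1 : (0:ℝ) < (a':ℝ) + 1 := by positivity
  have haA : ((a':ℝ) + 1) ≤ (A:ℝ) + 1 := by exact_mod_cast Nat.succ_le_succ hlt.le
  have hbb : ((b:ℝ)) ≤ (b':ℝ) := by exact_mod_cast hb
  have e1 : ((b':ℝ)+1)/((A:ℝ)+1) - ((b:ℝ)+1)/((A:ℝ)+1) = ((b':ℝ)-(b:ℝ))/((A:ℝ)+1) := by
    ring
  have e2 : ((b':ℝ)+1)/((a':ℝ)+1) - ((b:ℝ)+1)/((a':ℝ)+1) = ((b':ℝ)-(b:ℝ))/((a':ℝ)+1) := by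
    ring
  have h4 : ((b':ℝ)-(b:ℝ))/((A:ℝ)+1) ≤ ((b':ℝ)-(b:ℝ))/((a':ℝ)+1) := by
    gcongr
  linarith

/-- If the error cost `ce` is submodular in `(γ,a)` on `(0,∞) × {0,…,Am}`,
then the least PSNE of the symmetric-form game is nondecreasing in the SNR
vector `(γ₁,γ₂)`. -/
theorem least_psne_monotone (Am : ℕ) (w : ℝ) (hw : 0 < w)
    (ce : ℝ → ℕ → ℝ)
    (hsub : ∀ (gm gp : ℝ) (am ap : ℕ), 0 < gm → gm ≤ gp → am ≤ ap → ap ≤ Am →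
      ce gm am + ce gp ap ≤ ce gp am + ce gm ap)
    (c : ℝ → ℕ → ℕ → ℝ)
    (hc : ∀ (γ : ℝ) (a b : ℕ),
      c γ a b = w * ce γ a + ((b : ℝ) + 1) / ((a : ℝ) + 1))
    (γ1m γ1p γ2m γ2p : ℝ)
    (hγ1m : 0 < γ1m) (hγ1 : γ1m ≤ γ1p) (hγ2m : 0 < γ2m) (hγ2 : γ2m ≤ γ2p)
    (am bm ap bp : ℕ)
    -- (am, bm) is the least PSNE at (γ1m, γ2m)
    (hamA : am ≤ Am) (hbmA : bm ≤ Am)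
    (hmnash1 : ∀ a, a ≤ Am → c γ1m am bm ≤ c γ1m a bm)
    (hmnash2 : ∀ b, b ≤ Am → c γ2m bm am ≤ c γ2m b am)
    (hmleast : ∀ a b : ℕ, a ≤ Am → b ≤ Am →
      (∀ a', a' ≤ Am → c γ1m a b ≤ c γ1m a' b) →
      (∀ b', b' ≤ Am → c γ2m b a ≤ c γ2m b' a) → am ≤ a ∧ bm ≤ b)
    -- (ap, bp) is the least PSNE at (γ1p, γ2p)
    (hapA : ap ≤ Am) (hbpA : bp ≤ Am)
    (hpnash1 : ∀ a, a ≤ Am → c γ1p ap bp ≤ c γ1p a bp)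
    (hpnash2 : ∀ b, b ≤ Am → c γ2p bp ap ≤ c γ2p b ap)
    (hpleast : ∀ a b : ℕ, a ≤ Am → b ≤ Am →
      (∀ a', a' ≤ Am → c γ1p a b ≤ c γ1p a' b) →
      (∀ b', b' ≤ Am → c γ2p b a ≤ c γ2p b' a) → ap ≤ a ∧ bp ≤ b) :
    am ≤ ap ∧ bm ≤ bp := by
  classical
  -- least best response maps at the lower SNRs
  choose f1 hf1A hf1min hf1lt using fun b => exists_least_min Am (fun a => c γ1m a b)
  choose f2 hf2A hf2min hf2lt using fun a => exists_least_min Am (fun b => c γ2m b a)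
  -- monotonicity of the least best responses
  have m1 : ∀ b b', b ≤ b' → f1 b ≤ f1 b' := fun b b' hbb' =>
    br_le Am w hw ce hsub c hc γ1m γ1m hγ1m le_rfl b b' hbb' (f1 b) (hf1A b)
      (hf1lt b) (f1 b') (hf1A b') (hf1min b')
  have m2 : ∀ a a', a ≤ a' → f2 a ≤ f2 a' := fun a a' haa' =>
    br_le Am w hw ce hsub c hc γ2m γ2m hγ2m le_rfl a a' haa' (f2 a) (hf2A a)
      (hf2lt a) (f2 a') (hf2A a') (hf2min a')
  -- the least BRs at (γm, opponent = upper equilibrium) lie below the upper equilibrium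
  have top1 : f1 bp ≤ ap :=
    br_le Am w hw ce hsub c hc γ1m γ1p hγ1m hγ1 bp bp le_rfl (f1 bp) (hf1A bp)
      (hf1lt bp) ap hapA hpnash1
  have top2 : f2 ap ≤ bp :=
    br_le Am w hw ce hsub c hc γ2m γ2p hγ2m hγ2 ap ap le_rfl (f2 ap) (hf2A ap)
      (hf2lt ap) bp hbpA hpnash2
  -- downward best-response iteration from (ap, bp)
  set g : ℕ × ℕ → ℕ × ℕ := fun q => (f1 q.2, f2 q.1) with hg
  set p : ℕ → ℕ × ℕ := fun n => g^[n] (ap, bp) with hp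
  have hpsucc : ∀ n, (p (n+1)).1 = f1 (p n).2 ∧ (p (n+1)).2 = f2 (p n).1 := by
    intro n
    constructor <;> simp [hp, hg, Function.iterate_succ_apply']
  have step : ∀ n, (p (n+1)).1 ≤ (p n).1 ∧ (p (n+1)).2 ≤ (p n).2 := by
    intro n
    induction n with
    | zero =>
      rw [(hpsucc 0).1, (hpsucc 0).2]
      exact ⟨top1, top2⟩
    | succ k ih =>
      constructor
      · rw [(hpsucc (k+1)).1, (hpsucc k).1]
        exact m1 _ _ ih.2
      · rw [(hpsucc (k+1)).2, (hpsucc k).2]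
        exact m2 _ _ ih.1
  have mono : ∀ n, (p n).1 ≤ ap ∧ (p n).2 ≤ bp := by
    intro n
    induction n with
    | zero => exact ⟨le_rfl, le_rfl⟩
    | succ k ih => exact ⟨le_trans (step k).1 ih.1, le_trans (step k).2 ih.2⟩
  -- the iteration reaches a fixed point
  have hfix : ∃ n, p (n + 1) = p n := by
    by_contra hno
    push_neg at hno
    have hdec : ∀ n, (p (n+1)).1 + (p (n+1)).2 < (p n).1 + (p n).2 := by
      intro n
      have h := step n
      rcases Nat.lt_or_ge ((p (n+1)).1 + (p (n+1)).2) ((p n).1 + (p n).2) with h' | h'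
      · exact h'
      · exfalso
        apply hno n
        have h1 : (p (n+1)).1 = (p n).1 := by omega
        have h2 : (p (n+1)).2 = (p n).2 := by omega
        exact Prod.ext h1 h2
    have hbound : ∀ n, (p n).1 + (p n).2 + n ≤ (p 0).1 + (p 0).2 := by
      intro n
      induction n with
      | zero => omega
      | succ k ih => have := hdec k; omega
    have := hbound ((p 0).1 + (p 0).2 + 1)
    omega
  obtain ⟨n, hn⟩ := hfix
  set a' := (p n).1 with ha'
  set b' := (p n).2 with hb'
  have hfa : f1 b' = a' := by
    rw [← (hpsucc n).1, hn]
  have hfb : f2 a' = b' := by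
    rw [← (hpsucc n).2, hn]
  -- (a', b') is a PSNE at (γ1m, γ2m)
  have h1 : ∀ a'', a'' ≤ Am → c γ1m a' b' ≤ c γ1m a'' b' := by
    intro a'' h; rw [← hfa]; exact hf1min b' a'' h
  have h2 : ∀ b'', b'' ≤ Am → c γ2m b' a' ≤ c γ2m b'' a' := by
    intro b'' h; rw [← hfb]; exact hf2min a' b'' h
  have hA' : a' ≤ Am := by rw [← hfa]; exact hf1A b'
  have hB' : b' ≤ Am := by rw [← hfb]; exact hf2A a'
  obtain ⟨h3, h4⟩ := hmleast a' b' hA' hB' h1 h2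
  exact ⟨le_trans h3 (mono n).1, le_trans h4 (mono n).2⟩
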